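/- Let p ≥ 5 be prime and let c : Z_p → {R,Y,G,B} be a surjective rainbow Sidon free coloring such that: R is dominant, R is not 2-dominant, Y is 2-dominant, and the pattern YRB appears. Then every maximal R-string has length 1 or 3: for every x ∈ Z_p with c(x) = R and c(x−1) ≠ R, either c(x+1) ≠ R, or c(x+1) = c(x+2) = R and c(x+3) ≠ R. -/
import Mathlib


/-- `c` admits a rainbow solution to the Sidon equation `x₁ + x₂ = x₃ + x₄`:
a solution whose four colors are pairwise distinct. -/
def HasRainbowSidon {n : ℕ} {α : Type*} (c : ZMod n → α) : Prop :=
  ∃ x₁ x₂ x₃ x₄ : ZMod n, x₁ + x₂ = x₃ + x₄ ∧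
    c x₁ ≠ c x₂ ∧ c x₁ ≠ c x₃ ∧ c x₁ ≠ c x₄ ∧
    c x₂ ≠ c x₃ ∧ c x₂ ≠ c x₄ ∧ c x₃ ≠ c x₄

/-- The rainbow number `rb(ℤ_n, S)` of `ℤ_n` for the Sidon equation: the least `r > 0`
such that every exact (surjective) `r`-coloring of `ℤ_n` admits a rainbow Sidon solution.
(When no such `r` exists, `r = n + 1` belongs to the set vacuously, matching the
convention `rb(ℤ_n, S) = n + 1`.) -/
noncomputable def rbSidon (n : ℕ) : ℕ :=
  sInf {r : ℕ | 0 < r ∧ ∀ c : ZMod n → Fin r, Function.Surjective c → HasRainbowSidon c}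

/-- The four colors used in Section 2. -/
inductive Color : Type
  | R | Y | G | B
deriving DecidableEq

namespace RainbowAux

instance : Fintype Color where
  elems := {Color.R, Color.Y, Color.G, Color.B}
  complete := by intro x; cases x <;> decide

variable {p : ℕ}

lemma mk_rainbow {c : ZMod p → Color} (z w δ : ZMod p)
    (hzz : c z ≠ c (z + δ)) (hww : c w ≠ c (w + δ))
    (h1 : c z ≠ c w) (h2 : c z ≠ c (w + δ))
    (h3 : c (z + δ) ≠ c w) (h4 : c (z + δ) ≠ c (w + δ)) : HasRainbowSidon c := by
  refine ⟨z, w + δ, z + δ, w, by ring, h2, hzz, h1, fun h => h4 h.symm, fun h => hww h.symm, h3⟩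

lemma reach (hp : p.Prime) {σ : ZMod p} (hσ : σ ≠ 0) (z₀ y : ZMod p) :
    ∃ n : ℕ, y = z₀ + (n : ZMod p) * σ := by
  haveI : Fact p.Prime := ⟨hp⟩
  refine ⟨((y - z₀) * σ⁻¹).val, ?_⟩
  have hv : ((((y - z₀) * σ⁻¹).val : ℕ) : ZMod p) = (y - z₀) * σ⁻¹ :=
    ZMod.natCast_rightInverse _
  rw [hv, mul_assoc, inv_mul_cancel₀ hσ, mul_one]
  ring

lemma spread (hp : p.Prime) {σ : ZMod p} (hσ : σ ≠ 0) {A : ZMod p → Prop}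
    (step : ∀ z, A z → A (z + σ)) {z₀ : ZMod p} (base : A z₀) (y : ZMod p) : A y := by
  have key : ∀ n : ℕ, A (z₀ + (n : ZMod p) * σ) := by
    intro n
    induction n with
    | zero => simpa using base
    | succ k ih =>
      have h2 := step _ ih
      have he : z₀ + ((k + 1 : ℕ) : ZMod p) * σ = z₀ + (k : ZMod p) * σ + σ := by
        push_cast; ring
      rw [he]; exact h2
  obtain ⟨n, hy⟩ := reach hp hσ z₀ y
  rw [hy]; exact key n

open Color in
lemma pair_repr : ∀ X a b : Color, a ≠ b → X ≠ a → X ≠ b →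
    ∃ m : Color, m ≠ X ∧ m ≠ a ∧ m ≠ b := by decide

set_option synthInstance.maxSize 400 in
set_option synthInstance.maxHeartbeats 1000000 in
open Color in
lemma core' : ∀ mR mY mG mB : Color, mR ≠ R → mY ≠ Y → mG ≠ G → mB ≠ B →
    (∀ E : Color, E = R ∨ E = mR ∨ E = Y ∨ E = mY) ∨
    (∀ E : Color, E = R ∨ E = mR ∨ E = G ∨ E = mG) ∨
    (∀ E : Color, E = R ∨ E = mR ∨ E = B ∨ E = mB) ∨
    (∀ E : Color, E = Y ∨ E = mY ∨ E = G ∨ E = mG) ∨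
    (∀ E : Color, E = Y ∨ E = mY ∨ E = B ∨ E = mB) ∨
    (∀ E : Color, E = G ∨ E = mG ∨ E = B ∨ E = mB) ∨
    (∃ D : Color, (D = R ∨ D = mR) ∧ (D = Y ∨ D = mY) ∧ (D = G ∨ D = mG) ∧ (D = B ∨ D = mB)) := by
  decide

lemma cover_ne {X X' mX mX' e f : Color}
    (hcov : ∀ E : Color, E = X ∨ E = mX ∨ E = X' ∨ E = mX')
    (he1 : e ≠ X) (he2 : e ≠ mX) (hf1 : f ≠ X') (hf2 : f ≠ mX') : e ≠ f := by
  rcases hcov e with h | h | h | h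
  · exact absurd h he1
  · exact absurd h he2
  · intro hef; exact hf1 (hef.symm.trans h)
  · intro hef; exact hf2 (hef.symm.trans h)

lemma cover_rainbow {c : ZMod p → Color} (hfree : ¬ HasRainbowSidon c) {δ : ZMod p}
    {X X' mX mX' : Color} (z z' : ZMod p)
    (h1 : c z ≠ c (z + δ)) (h1' : c z' ≠ c (z' + δ))
    (hz1 : c z ≠ X) (hz2 : c z ≠ mX) (hz3 : c (z + δ) ≠ X) (hz4 : c (z + δ) ≠ mX)
    (hz1' : c z' ≠ X') (hz2' : c z' ≠ mX') (hz3' : c (z' + δ) ≠ X') (hz4' : c (z' + δ) ≠ mX')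
    (hcov : ∀ E : Color, E = X ∨ E = mX ∨ E = X' ∨ E = mX') : False :=
  hfree (mk_rainbow z z' δ h1 h1'
    (cover_ne hcov hz1 hz2 hz1' hz2')
    (cover_ne hcov hz1 hz2 hz3' hz4')
    (cover_ne hcov hz3 hz4 hz1' hz2')
    (cover_ne hcov hz3 hz4 hz3' hz4'))

/-- The star principle: at every nonzero distance some color is dominant. -/
lemma star (hp : p.Prime) {c : ZMod p → Color} (hsurj : Function.Surjective c)
    (hfree : ¬ HasRainbowSidon c) {δ : ZMod p} (hδ : δ ≠ 0) :
    ∃ X : Color, ∀ z, c z = c (z + δ) ∨ X = c z ∨ X = c (z + δ) := by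
  by_contra hcon
  push_neg at hcon
  choose w hw1 hw2 hw3 using hcon
  have hm0 := fun X => pair_repr X (c (w X)) (c (w X + δ)) (hw1 X) (hw2 X) (hw3 X)
  choose m hmX hma hmb using hm0
  rcases core' (m Color.R) (m Color.Y) (m Color.G) (m Color.B)
      (hmX Color.R) (hmX Color.Y) (hmX Color.G) (hmX Color.B) with
    h | h | h | h | h | h | h
  · exact cover_rainbow hfree (w Color.R) (w Color.Y) (hw1 _) (hw1 _)
      (Ne.symm (hw2 _)) (Ne.symm (hma _)) (Ne.symm (hw3 _)) (Ne.symm (hmb _))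
      (Ne.symm (hw2 _)) (Ne.symm (hma _)) (Ne.symm (hw3 _)) (Ne.symm (hmb _)) h
  · exact cover_rainbow hfree (w Color.R) (w Color.G) (hw1 _) (hw1 _)
      (Ne.symm (hw2 _)) (Ne.symm (hma _)) (Ne.symm (hw3 _)) (Ne.symm (hmb _))
      (Ne.symm (hw2 _)) (Ne.symm (hma _)) (Ne.symm (hw3 _)) (Ne.symm (hmb _)) h
  · exact cover_rainbow hfree (w Color.R) (w Color.B) (hw1 _) (hw1 _)
      (Ne.symm (hw2 _)) (Ne.symm (hma _)) (Ne.symm (hw3 _)) (Ne.symm (hmb _))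
      (Ne.symm (hw2 _)) (Ne.symm (hma _)) (Ne.symm (hw3 _)) (Ne.symm (hmb _)) h
  · exact cover_rainbow hfree (w Color.Y) (w Color.G) (hw1 _) (hw1 _)
      (Ne.symm (hw2 _)) (Ne.symm (hma _)) (Ne.symm (hw3 _)) (Ne.symm (hmb _))
      (Ne.symm (hw2 _)) (Ne.symm (hma _)) (Ne.symm (hw3 _)) (Ne.symm (hmb _)) h
  · exact cover_rainbow hfree (w Color.Y) (w Color.B) (hw1 _) (hw1 _)
      (Ne.symm (hw2 _)) (Ne.symm (hma _)) (Ne.symm (hw3 _)) (Ne.symm (hmb _))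
      (Ne.symm (hw2 _)) (Ne.symm (hma _)) (Ne.symm (hw3 _)) (Ne.symm (hmb _)) h
  · exact cover_rainbow hfree (w Color.G) (w Color.B) (hw1 _) (hw1 _)
      (Ne.symm (hw2 _)) (Ne.symm (hma _)) (Ne.symm (hw3 _)) (Ne.symm (hmb _))
      (Ne.symm (hw2 _)) (Ne.symm (hma _)) (Ne.symm (hw3 _)) (Ne.symm (hmb _)) h
  · obtain ⟨D, hDr, hDy, hDg, hDb⟩ := h
    have hD : ∀ E : Color, D = E ∨ D = m E := by
      intro E; cases E
      exacts [hDr, hDy, hDg, hDb]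
    have hclo : ∀ z, c z = D → c (z + δ) = D := by
      intro z hz
      by_contra hne
      have hDm : D = m (c (z + δ)) := by
        rcases hD (c (z + δ)) with h' | h'
        · exact absurd h'.symm hne
        · exact h'
      refine hfree (mk_rainbow z (w (c (z + δ))) δ ?_ (hw1 _) ?_ ?_ ?_ ?_)
      · rw [hz]; exact fun h' => hne h'.symm
      · rw [hz, hDm]; exact hma _
      · rw [hz, hDm]; exact hmb _
      · exact hw2 _
      · exact hw3 _
    obtain ⟨z₀, hz₀⟩ := hsurj D
    have hall := spread hp hδ (A := fun z => c z = D) hclo hz₀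
    obtain ⟨zR, hzR⟩ := hsurj Color.R
    obtain ⟨zY, hzY⟩ := hsurj Color.Y
    have h1 : c zR = D := hall zR
    have h2 : c zY = D := hall zY
    rw [hzR] at h1
    rw [hzY] at h2
    exact absurd (h1.trans h2.symm) (by decide)



lemma star_pin {c : ZMod p → Color} {δ : ZMod p} {X : Color}
    (hstar : ∀ z, c z = c (z + δ) ∨ X = c z ∨ X = c (z + δ))
    {z z' : ZMod p} {A B : Color} (hzz : z + δ = z') (hA : c z = A) (hB : c z' = B)
    (hAB : A ≠ B) : X = A ∨ X = B := by
  rcases hstar z with h | h | h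
  · rw [hzz, hA, hB] at h; exact absurd h hAB
  · rw [hA] at h; exact Or.inl h
  · rw [hzz, hB] at h; exact Or.inr h

lemma star_mem {c : ZMod p → Color} {δ : ZMod p} {X : Color}
    (hstar : ∀ z, c z = c (z + δ) ∨ X = c z ∨ X = c (z + δ))
    {z z' : ZMod p} {A : Color} (hzz : z + δ = z') (hA : c z = A) (hXA : X ≠ A) :
    c z' = A ∨ c z' = X := by
  rcases hstar z with h | h | h
  · rw [hzz] at h; exact Or.inl (h.symm.trans hA)
  · rw [hA] at h; exact absurd h hXA
  · rw [hzz] at h; exact Or.inr h.symm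

lemma pin_combine {X A B A' B' : Color} (h1 : X = A ∨ X = B) (h2 : X = A' ∨ X = B')
    (h3 : A ≠ A') (h4 : A ≠ B') : X = B := by
  rcases h1 with h | h
  · rcases h2 with h' | h'
    · exact absurd (h.symm.trans h') h3
    · exact absurd (h.symm.trans h') h4
  · exact h

lemma mem_combine {x A B C : Color} (h1 : x = A ∨ x = B) (h2 : x = C ∨ x = A)
    (hBC : B ≠ C) (hBA : B ≠ A) : x = A := by
  rcases h1 with h | h
  · exact h
  · rcases h2 with h' | h'
    · exact absurd (h.symm.trans h') hBC
    · exact absurd (h.symm.trans h') hBA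

lemma all_of_adj (hp : p.Prime) {c : ZMod p → Color}
    (hRdom : ∀ x : ZMod p, c x = c (x + 1) ∨ c x = Color.R ∨ c (x + 1) = Color.R)
    (hY2dom : ∀ x : ZMod p, c x = c (x + 2) ∨ c x = Color.Y ∨ c (x + 2) = Color.Y)
    {X : Color} (hXR : X ≠ Color.R) (hXY : X ≠ Color.Y)
    {z : ZMod p} (hz : c z = X) (hz1 : c (z + 1) = X) : ∀ y, c y = X := by
  haveI : Fact p.Prime := ⟨hp⟩
  have h1 : (1 : ZMod p) ≠ 0 := one_ne_zero
  have step : ∀ w : ZMod p, (c w = X ∧ c (w + 1) = X) → (c (w + 1) = X ∧ c (w + 1 + 1) = X) := by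
    intro w hw
    obtain ⟨ha, hb⟩ := hw
    refine ⟨hb, ?_⟩
    rcases hRdom (w + 1) with h | h | h
    · rw [← h]; exact hb
    · rw [hb] at h; exact absurd h hXR
    · exfalso
      rw [show w + 1 + 1 = w + 2 by ring] at h
      rcases hY2dom w with h2 | h2 | h2
      · rw [ha, h] at h2; exact hXR h2
      · rw [ha] at h2; exact hXY h2
      · rw [h] at h2; exact absurd h2 (by decide)
  intro y
  exact (spread hp h1 (A := fun w => c w = X ∧ c (w + 1) = X) step ⟨hz, hz1⟩ y).1

lemma exists_G_end (hp : p.Prime) (hp5 : 5 ≤ p) {c : ZMod p → Color}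
    (hsurj : Function.Surjective c)
    (hRdom : ∀ x : ZMod p, c x = c (x + 1) ∨ c x = Color.R ∨ c (x + 1) = Color.R)
    (hY2dom : ∀ x : ZMod p, c x = c (x + 2) ∨ c x = Color.Y ∨ c (x + 2) = Color.Y)
    {j : ZMod p} (hjY : c j = Color.Y) :
    ∃ u : ZMod p, c u = Color.G ∧ c (u + 1) = Color.R ∧ c (u + 2) = Color.Y ∧
      c (u - 1) = Color.R := by
  haveI : NeZero p := ⟨hp.pos.ne'⟩
  have h2ne : (2 : ZMod p) ≠ 0 := by
    intro h
    have h2 : ((2 : ℕ) : ZMod p) = 0 := by exact_mod_cast h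
    rw [ZMod.natCast_eq_zero_iff] at h2
    have := Nat.le_of_dvd (by norm_num) h2
    omega
  obtain ⟨g, hg⟩ := hsurj Color.G
  by_cases hall : ∀ w, c w = Color.G → c (w + 2) = Color.G
  · have := spread hp h2ne (A := fun w => c w = Color.G) (fun w hw => hall w hw) hg j
    rw [hjY] at this; exact absurd this (by decide)
  · push_neg at hall
    obtain ⟨u, hu, hu2⟩ := hall
    have huY : c (u + 2) = Color.Y := by
      rcases hY2dom u with h | h | h
      · exact absurd (by rw [← h, hu]) hu2
      · rw [hu] at h; exact absurd h (by decide)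
      · exact h
    have hu1 : c (u + 1) = Color.R := by
      rcases hRdom u with h | h | h
      · have hG1 : c (u + 1) = Color.G := by rw [← h, hu]
        have := all_of_adj hp hRdom hY2dom (by decide) (by decide) hu hG1 j
        rw [hjY] at this; exact absurd this (by decide)
      · rw [hu] at h; exact absurd h (by decide)
      · exact h
    have hum : c (u - 1) = Color.R := by
      have e : u - 1 + 1 = u := by ring
      rcases hRdom (u - 1) with h | h | h
      · rw [e] at h
        have hGm : c (u - 1) = Color.G := by rw [h, hu]
        have hGu : c (u - 1 + 1) = Color.G := by rw [e, hu]
        have := all_of_adj hp hRdom hY2dom (by decide) (by decide) hGm hGu j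
        rw [hjY] at this; exact absurd this (by decide)
      · exact h
      · rw [e, hu] at h; exact absurd h (by decide)
    exact ⟨u, hu, hu1, huY, hum⟩


/-- A maximal red string of length exactly 2 (pattern Y R R Y) is impossible. -/
lemma no_YRRY (hp : p.Prime) (hp5 : 5 ≤ p) {c : ZMod p → Color}
    (hsurj : Function.Surjective c) (hfree : ¬ HasRainbowSidon c)
    (hRdom : ∀ x : ZMod p, c x = c (x + 1) ∨ c x = Color.R ∨ c (x + 1) = Color.R)
    (hY2dom : ∀ x : ZMod p, c x = c (x + 2) ∨ c x = Color.Y ∨ c (x + 2) = Color.Y)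
    {j : ZMod p} (hjY : c j = Color.Y) (hjB : c (j + 2) = Color.B)
    {x : ZMod p} (h0 : c (x - 1) = Color.Y) (h1 : c x = Color.R)
    (h2 : c (x + 1) = Color.R) (h3 : c (x + 2) = Color.Y) : False := by
  obtain ⟨u, huG, huR, huY, humR⟩ := exists_G_end hp hp5 hsurj hRdom hY2dom hjY
  have hσ : (j + 2 - u : ZMod p) ≠ 0 := by
    intro h
    rw [sub_eq_zero] at h
    rw [← h, hjB] at huG
    exact absurd huG (by decide)
  have step : ∀ w : ZMod p,
      (c (w - 1) = Color.Y ∧ c w = Color.R ∧ c (w + 1) = Color.R ∧ c (w + 2) = Color.Y) →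
      (c (w + (j + 2 - u) - 1) = Color.Y ∧ c (w + (j + 2 - u)) = Color.R ∧
       c (w + (j + 2 - u) + 1) = Color.R ∧ c (w + (j + 2 - u) + 2) = Color.Y) := by
    intro w hw
    obtain ⟨hw0, hw1, hw2, hw3⟩ := hw
    have hne_e : (w - u : ZMod p) ≠ 0 := by
      intro h; rw [sub_eq_zero] at h
      rw [h, huG] at hw1; exact absurd hw1 (by decide)
    have hne_e1 : (w - u + 1 : ZMod p) ≠ 0 := by
      intro h
      have h' : u = w + 1 := by linear_combination -h
      rw [h', hw2] at huG; exact absurd huG (by decide)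
    have hne_em1 : (w - u - 1 : ZMod p) ≠ 0 := by
      intro h
      have h' : u = w - 1 := by linear_combination -h
      rw [h', hw0] at huG; exact absurd huG (by decide)
    have hne_e2 : (w - u + 2 : ZMod p) ≠ 0 := by
      intro h
      have h' : u = w + 2 := by linear_combination -h
      rw [h', hw3] at huG; exact absurd huG (by decide)
    obtain ⟨X1, hS1⟩ := star hp hsurj hfree hne_e
    obtain ⟨X2, hS2⟩ := star hp hsurj hfree hne_e1
    obtain ⟨X3, hS3⟩ := star hp hsurj hfree hne_em1
    obtain ⟨X4, hS4⟩ := star hp hsurj hfree hne_e2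
    have pX1 : X1 = Color.R := pin_combine
      (star_pin hS1 (show u + (w - u) = w by ring) huG hw1 (by decide))
      (star_pin hS1 (show u - 1 + (w - u) = w - 1 by ring) humR hw0 (by decide))
      (by decide) (by decide)
    subst pX1
    have pX2 : X2 = Color.R := pin_combine
      (star_pin hS2 (show u + (w - u + 1) = w + 1 by ring) huG hw2 (by decide))
      (star_pin hS2 (show u + 1 + (w - u + 1) = w + 2 by ring) huR hw3 (by decide))
      (by decide) (by decide)
    subst pX2
    have pX3 : X3 = Color.Y := pin_combine
      (star_pin hS3 (show u + (w - u - 1) = w - 1 by ring) huG hw0 (by decide))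
      (star_pin hS3 (show u + 2 + (w - u - 1) = w + 1 by ring) huY hw2 (by decide))
      (by decide) (by decide)
    subst pX3
    have cU2 : c (u - 2) = Color.Y := by
      rcases hS2 (u - 2) with h | h | h
      · rw [show u - 2 + (w - u + 1) = w - 1 by ring, hw0] at h; exact h
      · exfalso
        rcases hY2dom (u - 2) with h' | h' | h'
        · rw [show u - 2 + 2 = u by ring, huG] at h'
          exact absurd (h.trans h') (by decide)
        · exact absurd (h.trans h') (by decide)
        · rw [show u - 2 + 2 = u by ring, huG] at h'
          exact absurd h' (by decide)
      · rw [show u - 2 + (w - u + 1) = w - 1 by ring, hw0] at h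
        exact absurd h (by decide)
    have pX4 : X4 = Color.Y := pin_combine
      (star_pin hS4 (show u + (w - u + 2) = w + 2 by ring) huG hw3 (by decide))
      (star_pin hS4 (show u - 2 + (w - u + 2) = w by ring) cU2 hw1 (by decide))
      (by decide) (by decide)
    subst pX4
    have P1 : c (j + (w - u) + 1) = Color.Y := mem_combine
      (star_mem hS2 (show j + (w - u + 1) = j + (w - u) + 1 by ring) hjY (by decide))
      (star_mem hS3 (show j + 2 + (w - u - 1) = j + (w - u) + 1 by ring) hjB (by decide))
      (by decide) (by decide)
    have P2 : c (j + (w - u) + 2) = Color.R := by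
      have hm := star_mem hS1 (show j + 2 + (w - u) = j + (w - u) + 2 by ring) hjB (by decide)
      rcases hRdom (j + (w - u) + 1) with h | h | h
      · rw [P1, show j + (w - u) + 1 + 1 = j + (w - u) + 2 by ring] at h
        rcases hm with h' | h' <;> rw [← h] at h' <;> exact absurd h' (by decide)
      · rw [P1] at h; exact absurd h (by decide)
      · rw [show j + (w - u) + 1 + 1 = j + (w - u) + 2 by ring] at h; exact h
    have P3 := star_mem hS4 (show j + 2 + (w - u + 2) = j + (w - u) + 4 by ring) hjB
      (by decide)
    have P4 : c (j + (w - u) + 3) = Color.R := by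
      have hm := star_mem hS2 (show j + 2 + (w - u + 1) = j + (w - u) + 3 by ring) hjB
        (by decide)
      rcases hm with h | h
      · exfalso
        rcases hRdom (j + (w - u) + 3) with h' | h' | h'
        · rw [h, show j + (w - u) + 3 + 1 = j + (w - u) + 4 by ring] at h'
          rcases P3 with h4 | h4
          · have hadj := all_of_adj hp hRdom hY2dom
              (show Color.B ≠ Color.R by decide) (show Color.B ≠ Color.Y by decide) h
              (by rw [show j + (w - u) + 3 + 1 = j + (w - u) + 4 by ring]; exact h4) j
            rw [hjY] at hadj; exact absurd hadj (by decide)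
          · rw [h4] at h'; exact absurd h' (by decide)
        · rw [h] at h'; exact absurd h' (by decide)
        · rw [show j + (w - u) + 3 + 1 = j + (w - u) + 4 by ring] at h'
          rcases P3 with h4 | h4 <;> rw [h'] at h4 <;> exact absurd h4 (by decide)
      · exact h
    have P5 : c (j + (w - u) + 4) = Color.Y := by
      rcases hY2dom (j + (w - u) + 2) with h | h | h
      · rw [P2, show j + (w - u) + 2 + 2 = j + (w - u) + 4 by ring] at h
        rcases P3 with h4 | h4 <;> rw [← h] at h4 <;> exact absurd h4 (by decide)
      · rw [P2] at h; exact absurd h (by decide)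
      · rw [show j + (w - u) + 2 + 2 = j + (w - u) + 4 by ring] at h; exact h
    refine ⟨?_, ?_, ?_, ?_⟩
    · rw [show w + (j + 2 - u) - 1 = j + (w - u) + 1 by ring]; exact P1
    · rw [show w + (j + 2 - u) = j + (w - u) + 2 by ring]; exact P2
    · rw [show w + (j + 2 - u) + 1 = j + (w - u) + 3 by ring]; exact P4
    · rw [show w + (j + 2 - u) + 2 = j + (w - u) + 4 by ring]; exact P5
  have hAj := spread hp hσ
    (A := fun w => c (w - 1) = Color.Y ∧ c w = Color.R ∧ c (w + 1) = Color.R ∧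
      c (w + 2) = Color.Y) step ⟨h0, h1, h2, h3⟩ j
  have hc : c j = Color.R := hAj.2.1
  rw [hjY] at hc; exact absurd hc (by decide)


lemma mem_combine2 {x A B C : Color} (h1 : x = A ∨ x = C) (h2 : x = B ∨ x = C)
    (hAB : A ≠ B) : x = C := by
  rcases h2 with h | h
  · rcases h1 with h' | h'
    · exact absurd (h'.symm.trans h) hAB
    · exact h'
  · exact h

/-- A red string of length at least 4 (pattern Y R R R R) is impossible. -/
lemma no_YRRRR (hp : p.Prime) (hp5 : 5 ≤ p) {c : ZMod p → Color}
    (hsurj : Function.Surjective c) (hfree : ¬ HasRainbowSidon c)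
    (hRdom : ∀ x : ZMod p, c x = c (x + 1) ∨ c x = Color.R ∨ c (x + 1) = Color.R)
    (hY2dom : ∀ x : ZMod p, c x = c (x + 2) ∨ c x = Color.Y ∨ c (x + 2) = Color.Y)
    {j : ZMod p} (hjY : c j = Color.Y) (hjB : c (j + 2) = Color.B)
    {x : ZMod p} (h0 : c (x - 1) = Color.Y) (h1 : c x = Color.R)
    (h2 : c (x + 1) = Color.R) (h3 : c (x + 2) = Color.R) (h4 : c (x + 3) = Color.R) :
    False := by
  obtain ⟨u, huG, huR, huY, humR⟩ := exists_G_end hp hp5 hsurj hRdom hY2dom hjY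
  have hσ : (j + 2 - u : ZMod p) ≠ 0 := by
    intro h
    rw [sub_eq_zero] at h
    rw [← h, hjB] at huG
    exact absurd huG (by decide)
  have step : ∀ w : ZMod p,
      (c (w - 1) = Color.Y ∧ c w = Color.R ∧ c (w + 1) = Color.R ∧ c (w + 2) = Color.R ∧
        c (w + 3) = Color.R) →
      (c (w + (j + 2 - u) - 1) = Color.Y ∧ c (w + (j + 2 - u)) = Color.R ∧
       c (w + (j + 2 - u) + 1) = Color.R ∧ c (w + (j + 2 - u) + 2) = Color.R ∧
       c (w + (j + 2 - u) + 3) = Color.R) := by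
    intro w hw
    obtain ⟨hw0, hw1, hw2, hw3, hw4⟩ := hw
    have hne_e : (w - u : ZMod p) ≠ 0 := by
      intro h; rw [sub_eq_zero] at h
      rw [h, huG] at hw1; exact absurd hw1 (by decide)
    have hne_e1 : (w - u + 1 : ZMod p) ≠ 0 := by
      intro h
      have h' : u = w + 1 := by linear_combination -h
      rw [h', hw2] at huG; exact absurd huG (by decide)
    have hne_em1 : (w - u - 1 : ZMod p) ≠ 0 := by
      intro h
      have h' : u = w - 1 := by linear_combination -h
      rw [h', hw0] at huG; exact absurd huG (by decide)
    have hne_e2 : (w - u + 2 : ZMod p) ≠ 0 := by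
      intro h
      have h' : u = w + 2 := by linear_combination -h
      rw [h', hw3] at huG; exact absurd huG (by decide)
    have hne_e3 : (w - u + 3 : ZMod p) ≠ 0 := by
      intro h
      have h' : u = w + 3 := by linear_combination -h
      rw [h', hw4] at huG; exact absurd huG (by decide)
    obtain ⟨X1, hS1⟩ := star hp hsurj hfree hne_e
    obtain ⟨X2, hS2⟩ := star hp hsurj hfree hne_e1
    obtain ⟨X3, hS3⟩ := star hp hsurj hfree hne_em1
    obtain ⟨X4, hS4⟩ := star hp hsurj hfree hne_e2
    obtain ⟨X5, hS5⟩ := star hp hsurj hfree hne_e3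
    have pX1 : X1 = Color.R := pin_combine
      (star_pin hS1 (show u + (w - u) = w by ring) huG hw1 (by decide))
      (star_pin hS1 (show u - 1 + (w - u) = w - 1 by ring) humR hw0 (by decide))
      (by decide) (by decide)
    subst pX1
    have pX2 : X2 = Color.R := pin_combine
      (star_pin hS2 (show u + (w - u + 1) = w + 1 by ring) huG hw2 (by decide))
      (star_pin hS2 (show u + 2 + (w - u + 1) = w + 3 by ring) huY hw4 (by decide))
      (by decide) (by decide)
    subst pX2
    have pX3 : X3 = Color.Y := pin_combine
      (star_pin hS3 (show u + (w - u - 1) = w - 1 by ring) huG hw0 (by decide))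
      (star_pin hS3 (show u + 2 + (w - u - 1) = w + 1 by ring) huY hw2 (by decide))
      (by decide) (by decide)
    subst pX3
    have cU2 : c (u - 2) = Color.Y := by
      rcases hS2 (u - 2) with h | h | h
      · rw [show u - 2 + (w - u + 1) = w - 1 by ring, hw0] at h; exact h
      · exfalso
        rcases hY2dom (u - 2) with h' | h' | h'
        · rw [show u - 2 + 2 = u by ring, huG] at h'
          exact absurd (h.trans h') (by decide)
        · exact absurd (h.trans h') (by decide)
        · rw [show u - 2 + 2 = u by ring, huG] at h'
          exact absurd h' (by decide)
      · rw [show u - 2 + (w - u + 1) = w - 1 by ring, hw0] at h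
        exact absurd h (by decide)
    have pX4 : X4 = Color.R := pin_combine
      (star_pin hS4 (show u + (w - u + 2) = w + 2 by ring) huG hw3 (by decide))
      (star_pin hS4 (show u - 2 + (w - u + 2) = w by ring) cU2 hw1 (by decide))
      (by decide) (by decide)
    subst pX4
    have pX5 : X5 = Color.R := pin_combine
      (star_pin hS5 (show u + (w - u + 3) = w + 3 by ring) huG hw4 (by decide))
      (star_pin hS5 (show u - 2 + (w - u + 3) = w + 1 by ring) cU2 hw2 (by decide))
      (by decide) (by decide)
    subst pX5
    have P1 : c (j + (w - u) + 1) = Color.Y := mem_combine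
      (star_mem hS2 (show j + (w - u + 1) = j + (w - u) + 1 by ring) hjY (by decide))
      (star_mem hS3 (show j + 2 + (w - u - 1) = j + (w - u) + 1 by ring) hjB (by decide))
      (by decide) (by decide)
    have P2 : c (j + (w - u) + 2) = Color.R := mem_combine2
      (star_mem hS4 (show j + (w - u + 2) = j + (w - u) + 2 by ring) hjY (by decide))
      (star_mem hS1 (show j + 2 + (w - u) = j + (w - u) + 2 by ring) hjB (by decide))
      (by decide)
    have P3 : c (j + (w - u) + 3) = Color.R := mem_combine2
      (star_mem hS5 (show j + (w - u + 3) = j + (w - u) + 3 by ring) hjY (by decide))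
      (star_mem hS2 (show j + 2 + (w - u + 1) = j + (w - u) + 3 by ring) hjB (by decide))
      (by decide)
    have P4 : c (j + (w - u) + 4) = Color.R := by
      have hm := star_mem hS4 (show j + 2 + (w - u + 2) = j + (w - u) + 4 by ring) hjB
        (by decide)
      rcases hY2dom (j + (w - u) + 2) with h | h | h
      · rw [P2, show j + (w - u) + 2 + 2 = j + (w - u) + 4 by ring] at h; exact h.symm
      · rw [P2] at h; exact absurd h (by decide)
      · rw [show j + (w - u) + 2 + 2 = j + (w - u) + 4 by ring] at h
        rcases hm with h' | h' <;> rw [h'] at h <;> exact absurd h (by decide)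
    have P5 : c (j + (w - u) + 5) = Color.R := by
      have hm := star_mem hS5 (show j + 2 + (w - u + 3) = j + (w - u) + 5 by ring) hjB
        (by decide)
      rcases hY2dom (j + (w - u) + 3) with h | h | h
      · rw [P3, show j + (w - u) + 3 + 2 = j + (w - u) + 5 by ring] at h; exact h.symm
      · rw [P3] at h; exact absurd h (by decide)
      · rw [show j + (w - u) + 3 + 2 = j + (w - u) + 5 by ring] at h
        rcases hm with h' | h' <;> rw [h'] at h <;> exact absurd h (by decide)
    refine ⟨?_, ?_, ?_, ?_, ?_⟩
    · rw [show w + (j + 2 - u) - 1 = j + (w - u) + 1 by ring]; exact P1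
    · rw [show w + (j + 2 - u) = j + (w - u) + 2 by ring]; exact P2
    · rw [show w + (j + 2 - u) + 1 = j + (w - u) + 3 by ring]; exact P3
    · rw [show w + (j + 2 - u) + 2 = j + (w - u) + 4 by ring]; exact P4
    · rw [show w + (j + 2 - u) + 3 = j + (w - u) + 5 by ring]; exact P5
  have hAj := spread hp hσ
    (A := fun w => c (w - 1) = Color.Y ∧ c w = Color.R ∧ c (w + 1) = Color.R ∧
      c (w + 2) = Color.R ∧ c (w + 3) = Color.R) step ⟨h0, h1, h2, h3, h4⟩ j
  have hc : c j = Color.R := hAj.2.1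
  rw [hjY] at hc; exact absurd hc (by decide)

end RainbowAux

theorem red_strings_length_one_or_three (p : ℕ) (hp : p.Prime) (hp5 : 5 ≤ p)
    (c : ZMod p → Color) (hsurj : Function.Surjective c)
    (hfree : ¬ HasRainbowSidon c)
    (hRdom : ∀ x : ZMod p, c x = c (x + 1) ∨ c x = Color.R ∨ c (x + 1) = Color.R)
    (hRnot2dom : ¬ ∀ x : ZMod p, c x = c (x + 2) ∨ c x = Color.R ∨ c (x + 2) = Color.R)
    (hY2dom : ∀ x : ZMod p, c x = c (x + 2) ∨ c x = Color.Y ∨ c (x + 2) = Color.Y)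
    (hYRB : ∃ j : ZMod p, c j = Color.Y ∧ c (j + 1) = Color.R ∧ c (j + 2) = Color.B)
    : ∀ x : ZMod p, c x = Color.R → c (x - 1) ≠ Color.R →
      (c (x + 1) ≠ Color.R ∨
        (c (x + 1) = Color.R ∧ c (x + 2) = Color.R ∧ c (x + 3) ≠ Color.R)) := by
  obtain ⟨j, hjY, hjR, hjB⟩ := hYRB
  intro x hx hxm
  by_cases h1 : c (x + 1) = Color.R
  · right
    have hxm1 : c (x - 1) = Color.Y := by
      rcases hY2dom (x - 1) with h | h | h
      · rw [show x - 1 + 2 = x + 1 by ring, h1] at h; exact absurd h hxm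
      · exact h
      · rw [show x - 1 + 2 = x + 1 by ring, h1] at h; exact absurd h (by decide)
    have hx2 : c (x + 2) = Color.R ∨ c (x + 2) = Color.Y := by
      rcases hY2dom x with h | h | h
      · rw [hx] at h; exact Or.inl h.symm
      · rw [hx] at h; exact absurd h (by decide)
      · exact Or.inr h
    rcases hx2 with h2 | h2
    · refine ⟨h1, h2, ?_⟩
      intro h3
      exact RainbowAux.no_YRRRR hp hp5 hsurj hfree hRdom hY2dom hjY hjB hxm1 hx h1 h2 h3
    · exact absurd (RainbowAux.no_YRRY hp hp5 hsurj hfree hRdom hY2dom hjY hjB hxm1 hx h1 h2)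
        (by simp)
  · left; exact h1
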